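/- arXiv:1405.6450 — 5 statements merged into one kernel-verified Lean document; each statement's English description precedes it below -/
import Mathlib

section
/- Let b : ℤ → ℂ be a zero-mean second-order stationary random sequence with auto-covariance m[k] = E[b[k+l] b[l]*] and complementary auto-covariance m̃[k] = E[b[k+l] b[l]], both absolutely summable, and let M(f), M̃(f) denote their discrete-time Fourier transforms. Then |M̃(f)|² ≤ M(f) M(-f) for all f. -/
/-!
Put `X_N(g) = ∑_{k<N} b k e^{-2πigk}`. Stationarity turns `E[X_N(f) conj X_N(f)]` and
`E[X_N(f) X_N(-f)]` into the double sums `∑_{k,l<N} c(k-l) e^{-2πif(k-l)}` for `c = m` and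
`c = m̃`, and Cauchy–Schwarz in `L²` bounds the squared modulus of the second by the product of the
first at `f` and at `-f`. Divided by `N`, these double sums are the Fejér means of the Fourier series
of `m` and `m̃`, i.e. the Cesàro means of their symmetric partial sums, so they converge to `M(±f)` and
`M̃(f)`; the inequality survives the limit because it is homogeneous of degree two.
-/

open Complex Real MeasureTheory Filter Finset Topology

/-- `∑_{k,l<N} a (k - l) = ∑_{|j|<N} (N - |j|) • a j`, which is `N` times the `N`-th Fejér mean. -/
def fejerSum {E : Type*} [AddCommMonoid E] (a : ℤ → E) (N : ℕ) : E :=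
  ∑ k ∈ range N, ∑ l ∈ range N, a (k - l)

section Fejer

variable {E : Type*}

lemma sum_Icc_neg_eq_sum_range [AddCommMonoid E] (a : ℤ → E) (N : ℕ) :
    ∑ j ∈ Icc (-(N : ℤ)) N, a j = ∑ i ∈ range (N + (N + 1)), a (i - N) :=
  sum_nbij' (fun j => (j + N).toNat) (fun i => i - N)
    (fun j hj => by simp only [mem_Icc, mem_range] at hj ⊢; omega)
    (fun i hi => by simp only [mem_Icc, mem_range] at hi ⊢; omega)
    (fun j hj => by simp only [mem_Icc] at hj; omega)
    (fun i _ => by omega)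
    (fun j hj => by simp only [mem_Icc] at hj; congr 1; omega)

lemma fejerSum_succ [AddCommMonoid E] (a : ℤ → E) (N : ℕ) :
    fejerSum a (N + 1) = fejerSum a N + ∑ j ∈ Icc (-(N : ℤ)) N, a j := by
  have hreflect : ∑ l ∈ range (N + 1), a ((N : ℤ) - l) = ∑ i ∈ range (N + 1), a i := by
    rw [← sum_range_reflect]
    exact sum_congr rfl fun i hi => by simp only [mem_range] at hi; congr 1; omega
  simp only [sum_range_succ, sub_self] at hreflect
  simp only [fejerSum, sum_range_succ, sum_add_distrib, sum_Icc_neg_eq_sum_range, sum_range_add,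
    Nat.cast_add, add_sub_cancel_left, sub_self, ← hreflect]
  abel

lemma fejerSum_eq_sum_range [AddCommMonoid E] (a : ℤ → E) (N : ℕ) :
    fejerSum a N = ∑ n ∈ range N, ∑ j ∈ Icc (-(n : ℤ)) n, a j := by
  induction N with
  | zero => simp [fejerSum]
  | succ N ih => rw [fejerSum_succ, ih, sum_range_succ]

theorem tendsto_inv_smul_fejerSum [NormedAddCommGroup E] [NormedSpace ℝ E] {a : ℤ → E}
    (ha : Summable a) :
    Tendsto (fun N : ℕ => (N : ℝ)⁻¹ • fejerSum a N) atTop (𝓝 (∑' j, a j)) := by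
  have hsym : Tendsto (fun n : ℕ => ∑ j ∈ Icc (-(n : ℤ)) n, a j) atTop (𝓝 (∑' j, a j)) :=
    SummationFilter.hasSum_symmetricIcc_iff.1
      (ha.hasSum.mono_left (SummationFilter.symmetricIcc ℤ).le_atTop)
  simpa only [fejerSum_eq_sum_range] using hsym.cesaro_smul

end Fejer

noncomputable def dtftKernel (g : ℝ) (k : ℤ) : ℂ :=
  Complex.exp (-2 * (π : ℂ) * Complex.I * (g : ℂ) * (k : ℂ))

lemma dtftKernel_mul_neg (g : ℝ) (k l : ℤ) :
    dtftKernel g k * dtftKernel (-g) l = dtftKernel g (k - l) := by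
  simp only [dtftKernel, ← Complex.exp_add]
  push_cast
  ring_nf

lemma conj_dtftKernel (g : ℝ) (k : ℤ) : starRingEnd ℂ (dtftKernel g k) = dtftKernel (-g) k := by
  simp only [dtftKernel, ← Complex.exp_conj, map_mul, map_neg, map_ofNat, Complex.conj_I,
    Complex.conj_ofReal, map_intCast]
  push_cast
  ring_nf

lemma norm_dtftKernel (g : ℝ) (k : ℤ) : ‖dtftKernel g k‖ = 1 := by
  rw [dtftKernel, Complex.norm_exp]
  simp

lemma tendsto_inv_smul_fejerSum_dtft {c : ℤ → ℂ} (hc : Summable fun k => ‖c k‖) (g : ℝ) :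
    Tendsto (fun N : ℕ => (N : ℝ)⁻¹ • fejerSum (fun k => c k * dtftKernel g k) N) atTop
      (𝓝 (∑' k, c k * dtftKernel g k)) :=
  tendsto_inv_smul_fejerSum <| hc.of_norm_bounded fun k => by rw [norm_mul, norm_dtftKernel, mul_one]

section Integrals

variable {Ω : Type*} [MeasurableSpace Ω] {μ : Measure Ω}

lemma integral_sum_mul_sum {ι κ : Type*} (s : Finset ι) (t : Finset κ) {X : ι → Ω → ℂ}
    {Y : κ → Ω → ℂ} (h : ∀ i j, Integrable (fun ω => X i ω * Y j ω) μ) :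
    ∫ ω, (∑ i ∈ s, X i ω) * (∑ j ∈ t, Y j ω) ∂μ = ∑ i ∈ s, ∑ j ∈ t, ∫ ω, X i ω * Y j ω ∂μ := by
  simp only [sum_mul_sum]
  rw [integral_finsetSum _ fun i _ => integrable_finsetSum _ fun j _ => h i j]
  exact sum_congr rfl fun i _ => integral_finsetSum _ fun j _ => h i j

lemma integral_mul_conj (X : Ω → ℂ) :
    ∫ ω, X ω * starRingEnd ℂ (X ω) ∂μ = ((∫ ω, ‖X ω‖ ^ 2 ∂μ : ℝ) : ℂ) := by
  simp only [Complex.mul_conj, Complex.normSq_eq_norm_sq]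
  exact integral_ofReal

lemma norm_integral_mul_sq_le {X Y : Ω → ℂ} (hX : MemLp X 2 μ) (hY : MemLp Y 2 μ) :
    ‖∫ ω, X ω * Y ω ∂μ‖ ^ 2 ≤ (∫ ω, ‖X ω‖ ^ 2 ∂μ) * ∫ ω, ‖Y ω‖ ^ 2 ∂μ := by
  have hHolder := integral_mul_norm_le_Lp_mul_Lq (μ := μ) Real.HolderConjugate.two_two
    (f := X) (g := Y) (by rwa [ENNReal.ofReal_ofNat]) (by rwa [ENNReal.ofReal_ofNat])
  simp only [Real.rpow_two] at hHolder
  have hXn : 0 ≤ ∫ ω, ‖X ω‖ ^ 2 ∂μ := integral_nonneg fun ω => by positivity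
  have hYn : 0 ≤ ∫ ω, ‖Y ω‖ ^ 2 ∂μ := integral_nonneg fun ω => by positivity
  calc ‖∫ ω, X ω * Y ω ∂μ‖ ^ 2 ≤ (∫ ω, ‖X ω‖ * ‖Y ω‖ ∂μ) ^ 2 := by
        gcongr
        simpa only [norm_mul] using norm_integral_le_integral_norm (fun ω => X ω * Y ω)
    _ ≤ ((∫ ω, ‖X ω‖ ^ 2 ∂μ) ^ (1 / 2 : ℝ) * (∫ ω, ‖Y ω‖ ^ 2 ∂μ) ^ (1 / 2 : ℝ)) ^ 2 :=
        pow_le_pow_left₀ (integral_nonneg fun ω => by positivity) hHolder 2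
    _ = (∫ ω, ‖X ω‖ ^ 2 ∂μ) * ∫ ω, ‖Y ω‖ ^ 2 ∂μ := by
        rw [mul_pow, ← Real.sqrt_eq_rpow, ← Real.sqrt_eq_rpow, Real.sq_sqrt hXn, Real.sq_sqrt hYn]

lemma memLp_two_of_integrable_mul_conj {X : Ω → ℂ} (hX : AEStronglyMeasurable X μ)
    (h : Integrable (fun ω => X ω * starRingEnd ℂ (X ω)) μ) : MemLp X 2 μ := by
  refine (memLp_two_iff_integrable_sq_norm hX).2 (h.norm.congr (ae_of_all _ fun ω => ?_))
  simp only [norm_mul, RCLike.norm_conj, sq]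

end Integrals

section PartialDTFT

variable {Ω : Type*}

noncomputable def partialDTFT (b : ℤ → Ω → ℂ) (g : ℝ) (N : ℕ) (ω : Ω) : ℂ :=
  ∑ k ∈ range N, b k ω * dtftKernel g k

lemma conj_partialDTFT (b : ℤ → Ω → ℂ) (g : ℝ) (N : ℕ) (ω : Ω) :
    starRingEnd ℂ (partialDTFT b g N ω) =
      partialDTFT (fun k ω => starRingEnd ℂ (b k ω)) (-g) N ω := by
  simp only [partialDTFT, map_sum, map_mul, conj_dtftKernel]

variable [MeasurableSpace Ω] {μ : Measure Ω}

lemma memLp_partialDTFT {p : ENNReal} {b : ℤ → Ω → ℂ} (hb : ∀ k, MemLp (b k) p μ) (g : ℝ)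
    (N : ℕ) :
    MemLp (partialDTFT b g N) p μ := by
  unfold partialDTFT
  exact memLp_finsetSum _ fun k _ => (hb k).mul_const _

lemma integral_partialDTFT_mul {b v : ℤ → Ω → ℂ} {c : ℤ → ℂ}
    (hint : ∀ k l, Integrable (fun ω => b k ω * v l ω) μ)
    (hc : ∀ k l, ∫ ω, b k ω * v l ω ∂μ = c (k - l)) (g : ℝ) (N : ℕ) :
    ∫ ω, partialDTFT b g N ω * partialDTFT v (-g) N ω ∂μ =
      fejerSum (fun j => c j * dtftKernel g j) N := by
  have hmul : ∀ k l : ℤ, ∀ ω, b k ω * dtftKernel g k * (v l ω * dtftKernel (-g) l) =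
      dtftKernel g (k - l) * (b k ω * v l ω) := fun k l ω => by
    rw [← dtftKernel_mul_neg]; ring
  simp only [partialDTFT, fejerSum]
  rw [integral_sum_mul_sum _ _ fun k l => by simpa only [hmul] using (hint k l).const_mul _]
  refine sum_congr rfl fun k _ => sum_congr rfl fun l _ => ?_
  simp only [hmul]
  rw [integral_const_mul, hc, mul_comm]

end PartialDTFT

lemma norm_sq_le_re_mul_re_of_tendsto {a b c : ℕ → ℂ} {r : ℕ → ℝ} {A B C : ℂ}
    (hle : ∀ N, ‖b N‖ ^ 2 ≤ (a N).re * (c N).re)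
    (ha : Tendsto (fun N => r N • a N) atTop (𝓝 A)) (hb : Tendsto (fun N => r N • b N) atTop (𝓝 B))
    (hc : Tendsto (fun N => r N • c N) atTop (𝓝 C)) :
    ‖B‖ ^ 2 ≤ A.re * C.re := by
  refine le_of_tendsto_of_tendsto' (hb.norm.pow 2)
    (((continuous_re.tendsto _).comp ha).mul ((continuous_re.tendsto _).comp hc)) fun N => ?_
  have h := mul_le_mul_of_nonneg_left (hle N) (sq_nonneg (r N))
  simp only [Function.comp_apply, norm_smul, Complex.smul_re, mul_pow, Real.norm_eq_abs, sq_abs,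
    smul_eq_mul]
  linarith

theorem stmt_1_general {Ω : Type*} [MeasurableSpace Ω] (μ : Measure Ω)
    (b : ℤ → Ω → ℂ) (m mt : ℤ → ℂ)
    (hmeas : ∀ k, AEStronglyMeasurable (b k) μ)
    (hint : ∀ k l : ℤ, Integrable (fun ω => b (k + l) ω * (starRingEnd ℂ) (b l ω)) μ)
    (hint' : ∀ k l : ℤ, Integrable (fun ω => b (k + l) ω * b l ω) μ)
    (hm : ∀ k l : ℤ, ∫ ω, b (k + l) ω * (starRingEnd ℂ) (b l ω) ∂μ = m k)
    (hmt : ∀ k l : ℤ, ∫ ω, b (k + l) ω * b l ω ∂μ = mt k)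
    (hsm : Summable fun k : ℤ => ‖m k‖) (hsmt : Summable fun k : ℤ => ‖mt k‖)
    (M Mt : ℝ → ℂ)
    (hM : ∀ f : ℝ, M f = ∑' k : ℤ, m k * Complex.exp (-2 * (π : ℂ) * Complex.I * (f : ℂ) * (k : ℂ)))
    (hMt : ∀ f : ℝ, Mt f = ∑' k : ℤ, mt k * Complex.exp (-2 * (π : ℂ) * Complex.I * (f : ℂ) * (k : ℂ)))
    (f : ℝ) :
    ‖Mt f‖ ^ 2 ≤ (M f).re * (M (-f)).re := by
  have hcovInt : ∀ k l, Integrable (fun ω => b k ω * starRingEnd ℂ (b l ω)) μ := fun k l => by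
    simpa using hint (k - l) l
  have hrelInt : ∀ k l, Integrable (fun ω => b k ω * b l ω) μ := fun k l => by
    simpa using hint' (k - l) l
  have hcov : ∀ k l, ∫ ω, b k ω * starRingEnd ℂ (b l ω) ∂μ = m (k - l) := fun k l => by
    simpa using hm (k - l) l
  have hrel : ∀ k l, ∫ ω, b k ω * b l ω ∂μ = mt (k - l) := fun k l => by
    simpa using hmt (k - l) l
  have hX : ∀ g N, MemLp (partialDTFT b g N) 2 μ := memLp_partialDTFT fun k =>
    memLp_two_of_integrable_mul_conj (hmeas k) (hcovInt k k)
  have hpower : ∀ g N, ((∫ ω, ‖partialDTFT b g N ω‖ ^ 2 ∂μ : ℝ) : ℂ) =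
      fejerSum (fun j => m j * dtftKernel g j) N := fun g N => by
    rw [← integral_mul_conj, ← integral_partialDTFT_mul hcovInt hcov]
    simp only [conj_partialDTFT]
  rw [hM, hM, hMt]
  refine norm_sq_le_re_mul_re_of_tendsto (fun N => ?_) (tendsto_inv_smul_fejerSum_dtft hsm f)
    (tendsto_inv_smul_fejerSum_dtft hsmt f) (tendsto_inv_smul_fejerSum_dtft hsm (-f))
  rw [← hpower, ← hpower, ofReal_re, ofReal_re, ← integral_partialDTFT_mul hrelInt hrel]
  exact norm_integral_mul_sq_le (hX f N) (hX (-f) N)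

/-- Picinbono's inequality `|M̃(f)|² ≤ M(f) M(-f)` between the PSD and the
complementary PSD of a zero-mean second-order stationary complex sequence. -/
theorem stmt_1 {Ω : Type*} [MeasurableSpace Ω] (μ : Measure Ω) [IsProbabilityMeasure μ]
    (b : ℤ → Ω → ℂ) (m mt : ℤ → ℂ)
    (hmeas : ∀ k, AEStronglyMeasurable (b k) μ)
    (hint : ∀ k l : ℤ, Integrable (fun ω => b (k + l) ω * (starRingEnd ℂ) (b l ω)) μ)
    (hint' : ∀ k l : ℤ, Integrable (fun ω => b (k + l) ω * b l ω) μ)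
    (hmean : ∀ k : ℤ, ∫ ω, b k ω ∂μ = 0)
    (hm : ∀ k l : ℤ, ∫ ω, b (k + l) ω * (starRingEnd ℂ) (b l ω) ∂μ = m k)
    (hmt : ∀ k l : ℤ, ∫ ω, b (k + l) ω * b l ω ∂μ = mt k)
    (hsm : Summable fun k : ℤ => ‖m k‖) (hsmt : Summable fun k : ℤ => ‖mt k‖)
    (M Mt : ℝ → ℂ)
    (hM : ∀ f : ℝ, M f = ∑' k : ℤ, m k * Complex.exp (-2 * (π : ℂ) * Complex.I * (f : ℂ) * (k : ℂ)))
    (hMt : ∀ f : ℝ, Mt f = ∑' k : ℤ, mt k * Complex.exp (-2 * (π : ℂ) * Complex.I * (f : ℂ) * (k : ℂ)))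
    (f : ℝ) :
    ‖Mt f‖ ^ 2 ≤ (M f).re * (M (-f)).re :=
  stmt_1_general μ b m mt hmeas hint hint' hm hmt hsm hsmt M Mt hM hMt f
end

section
/- Let m, m̂, λ, λ̂ > 0, 0 ≤ k ≤ 1, k̄ = 1 - k². Define f(a, â) = (m̂(1 + mλa k̄) + m(1 + m̂λ̂â k̄))/(1 + mλa + m̂λ̂â + mλa·m̂λ̂â·k̄) for a, â ≥ 0. Then f is strictly decreasing in a for each fixed â ≥ 0, i.e., ∂f/∂a < 0. -/
/-- The combined MSE contribution `ε(f)+ε(-f)` is strictly decreasing in the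
energy density `a` for each fixed `â ≥ 0`. -/
theorem stmt_6 (m mh lam lamh k : ℝ) (hm : 0 < m) (hmh : 0 < mh)
    (hlam : 0 < lam) (hlamh : 0 < lamh) (hk0 : 0 ≤ k) (hk1 : k ≤ 1)
    (ah : ℝ) (hah : 0 ≤ ah) :
    StrictAntiOn
      (fun a : ℝ =>
        (mh * (1 + m * lam * a * (1 - k ^ 2)) + m * (1 + mh * lamh * ah * (1 - k ^ 2))) /
          (1 + m * lam * a + mh * lamh * ah + m * lam * a * mh * lamh * ah * (1 - k ^ 2)))
      (Set.Ici 0) := by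
  intro x hx y hy hxy
  simp only [Set.mem_Ici] at hx hy
  have hkb : 0 ≤ 1 - k ^ 2 := by nlinarith
  have hB : 0 ≤ mh * lamh * ah := by positivity
  have hdx : 0 < 1 + m * lam * x + mh * lamh * ah + m * lam * x * mh * lamh * ah * (1 - k ^ 2) := by
    have : 0 ≤ m * lam * x := by positivity
    nlinarith [mul_nonneg (mul_nonneg this hB) hkb]
  have hdy : 0 < 1 + m * lam * y + mh * lamh * ah + m * lam * y * mh * lamh * ah * (1 - k ^ 2) := by
    have : 0 ≤ m * lam * y := by positivity
    nlinarith [mul_nonneg (mul_nonneg this hB) hkb]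
  simp only
  rw [div_lt_div_iff₀ hdy hdx]
  have hA : 0 < m * lam := by positivity
  have hE : 0 < 1 + mh * lamh * ah * (1 - k ^ 2) := by nlinarith [mul_nonneg hB hkb]
  have hG : mh * (1 - k ^ 2) * (1 + mh * lamh * ah) -
      (mh + m * (1 + mh * lamh * ah * (1 - k ^ 2))) * (1 + mh * lamh * ah * (1 - k ^ 2)) < 0 := by
    nlinarith [mul_pos hm (mul_pos hE hE), mul_nonneg hmh.le (sq_nonneg k)]
  nlinarith [mul_pos (mul_pos hA (sub_pos.mpr hxy)) (neg_pos.mpr hG)]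
end

section
/- The function u₁(â) = max(0, √(λ(m̂k² + m ĝ(â)²))/√ν - (1 + m̂λ̂â)) / (λ m ĝ(â)), where ĝ(â) = 1 + m̂λ̂â k̄, with constants m, m̂, λ, λ̂, ν > 0, 0 ≤ k < 1, k̄ = 1-k², is nonincreasing on [0, ∞). -/
set_option maxHeartbeats 1000000 in
/-- The water-filling-type update map `u₁` is nonincreasing on `[0,∞)`. -/
theorem stmt_9 (m mh lam lamh ν k : ℝ) (hm : 0 < m) (hmh : 0 < mh)
    (hlam : 0 < lam) (hlamh : 0 < lamh) (hν : 0 < ν) (hk0 : 0 ≤ k) (hk1 : k < 1)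
    (u₁ : ℝ → ℝ)
    (hu₁ : ∀ ah : ℝ, u₁ ah =
      max 0 (Real.sqrt (lam * (mh * k ^ 2 + m * (1 + mh * lamh * ah * (1 - k ^ 2)) ^ 2)) / Real.sqrt ν
              - (1 + mh * lamh * ah)) /
        (lam * m * (1 + mh * lamh * ah * (1 - k ^ 2)))) :
    AntitoneOn u₁ (Set.Ici 0) := by
  intro a ha b hb hab
  simp only [Set.mem_Ici] at ha hb
  rw [hu₁ a, hu₁ b]
  have hK : 0 < 1 - k ^ 2 := by nlinarith
  set ga : ℝ := 1 + mh * lamh * a * (1 - k ^ 2) with hga_def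
  set gb : ℝ := 1 + mh * lamh * b * (1 - k ^ 2) with hgb_def
  have hga : 0 < ga := by have := mul_nonneg (mul_nonneg hmh.le hlamh.le) ha; nlinarith
  have hgb : 0 < gb := by have := mul_nonneg (mul_nonneg hmh.le hlamh.le) hb; nlinarith
  have hgab : ga ≤ gb := by
    have h := mul_nonneg (mul_pos (mul_pos hmh hlamh) hK).le (sub_nonneg.mpr hab)
    rw [hga_def, hgb_def]; nlinarith
  clear_value ga gb
  have hDa : 0 < lam * m * ga := by positivity
  have hDb : 0 < lam * m * gb := by positivity
  set Sa : ℝ := Real.sqrt (lam * (mh * k ^ 2 + m * ga ^ 2)) with hSa_def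
  set Sb : ℝ := Real.sqrt (lam * (mh * k ^ 2 + m * gb ^ 2)) with hSb_def
  have hSa0 : 0 ≤ Sa := Real.sqrt_nonneg _
  have hSb0 : 0 ≤ Sb := Real.sqrt_nonneg _
  have hsν : 0 < Real.sqrt ν := Real.sqrt_pos.mpr hν
  set fa : ℝ := Sa / Real.sqrt ν - (1 + mh * lamh * a) with hfa_def
  set fb : ℝ := Sb / Real.sqrt ν - (1 + mh * lamh * b) with hfb_def
  clear_value Sa Sb fa fb
  rw [div_le_div_iff₀ hDb hDa]
  -- key sqrt inequality: Sb * ga ≤ Sa * gb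
  have P1 : Sb * ga ≤ Sa * gb := by
    have h1 : Sb * ga = Real.sqrt (lam * (mh * k ^ 2 + m * gb ^ 2) * ga ^ 2) := by
      rw [hSb_def, Real.sqrt_mul (by positivity) (ga ^ 2), Real.sqrt_sq hga.le]
    have h2 : Sa * gb = Real.sqrt (lam * (mh * k ^ 2 + m * ga ^ 2) * gb ^ 2) := by
      rw [hSa_def, Real.sqrt_mul (by positivity) (gb ^ 2), Real.sqrt_sq (hga.le.trans hgab)]
    rw [h1, h2]
    apply Real.sqrt_le_sqrt
    nlinarith [mul_nonneg (mul_nonneg (mul_nonneg hlam.le hmh.le) (sq_nonneg k))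
      (mul_nonneg (sub_nonneg.mpr hgab) (by linarith : (0:ℝ) ≤ ga + gb))]
  have P2 : (1 + mh * lamh * a) * gb ≤ (1 + mh * lamh * b) * ga := by
    have hc : 0 < mh * lamh := mul_pos hmh hlamh
    nlinarith [mul_nonneg (mul_nonneg hc.le hc.le) (mul_nonneg ha hb), sq_nonneg k,
      mul_nonneg (mul_nonneg hc.le hk0) hk0]
  have T1 : Sb * (lam * m * ga) / Real.sqrt ν ≤ Sa * (lam * m * gb) / Real.sqrt ν := by
    have hnum : Sb * (lam * m * ga) ≤ Sa * (lam * m * gb) := by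
      linarith [mul_le_mul_of_nonneg_left P1 (mul_pos hlam hm).le]
    exact (div_le_div_iff_of_pos_right hsν).mpr hnum
  have key : fb * (lam * m * ga) ≤ fa * (lam * m * gb) := by
    have e1 : fb * (lam * m * ga)
        = Sb * (lam * m * ga) / Real.sqrt ν - (1 + mh * lamh * b) * (lam * m * ga) := by
      rw [hfb_def]; ring
    have e2 : fa * (lam * m * gb)
        = Sa * (lam * m * gb) / Real.sqrt ν - (1 + mh * lamh * a) * (lam * m * gb) := by
      rw [hfa_def]; ring
    have T2 : (1 + mh * lamh * a) * (lam * m * gb) ≤ (1 + mh * lamh * b) * (lam * m * ga) := by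
      linarith [mul_le_mul_of_nonneg_left P2 (mul_pos hlam hm).le]
    linarith [e1, e2, T1, T2]
  rcases le_or_gt fb 0 with hfb | hfb
  · rw [max_eq_left hfb]
    have : (0:ℝ) ≤ max 0 fa := le_max_left 0 fa
    nlinarith
  · rw [max_eq_right hfb.le]
    calc fb * (lam * m * ga) ≤ fa * (lam * m * gb) := key
      _ ≤ max 0 fa * (lam * m * gb) :=
        mul_le_mul_of_nonneg_right (le_max_right 0 fa) hDb.le
end

section
/- Let m, m̂, λ, λ̂ > 0 and 0 ≤ k < 1 with k̄ = 1 - k². The function f(a, â) = (m̂(1 + mλa k̄) + m(1 + m̂λ̂â k̄))/(1 + mλa + m̂λ̂â + mλa m̂λ̂â k̄) is a convex function of (a, â) on [0,∞)². -/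
/-!
With `u = 1 + k̄ m λ a` and `v = 1 + k̄ m̂ λ̂ â` the function equals
`k̄ (m̂ u + m v) / (u v - k²) = k̄ (m̂ / (v - k² / u) + m / (u - k² / v))`.
Since `u, v ≥ 1` are affine and `k² < 1`, both `v - k² / u` and `u - k² / v` are positive and
concave, and the reciprocal of a positive concave function is convex.
-/

open Set

theorem div_sub_div_add_div_sub_div {K : Type*} [Field K] {u v c : K} (α β : K) (hu : u ≠ 0)
    (hv : v ≠ 0) (huv : u * v - c ≠ 0) :
    α / (v - c / u) + β / (u - c / v) = (α * u + β * v) / (u * v - c) := by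
  have h₁ : v - c / u = (u * v - c) / u := by field_simp
  have h₂ : u - c / v = (u * v - c) / v := by field_simp
  rw [h₁, h₂, div_div_eq_mul_div, div_div_eq_mul_div, ← add_div]

section

variable {𝕜 E : Type*} [Field 𝕜] [LinearOrder 𝕜] [IsStrictOrderedRing 𝕜] [AddCommMonoid E]
  [Module 𝕜 E] {s : Set E}

theorem ConcaveOn.convexOn_inv {g : E → 𝕜} (hg : ConcaveOn 𝕜 s g) (hg₀ : ∀ x ∈ s, 0 < g x) :
    ConvexOn 𝕜 s fun x => (g x)⁻¹ := by
  refine ⟨hg.1, fun x hx y hy a b ha hb hab => ?_⟩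
  have hcomb : 0 < a • g x + b • g y := convex_Ioi 0 (hg₀ x hx) (hg₀ y hy) ha hb hab
  have hinv := (convexOn_zpow (𝕜 := 𝕜) (-1)).2 (hg₀ x hx) (hg₀ y hy) ha hb hab
  simp only [zpow_neg_one] at hinv
  exact (inv_anti₀ hcomb (hg.2 hx hy ha hb hab)).trans hinv

theorem ConcaveOn.convexOn_inv_sub_div {u v : E → 𝕜} {c : 𝕜} (hu : ConcaveOn 𝕜 s u)
    (hv : ConcaveOn 𝕜 s v) (hu₀ : ∀ x ∈ s, 0 < u x) (hc : 0 ≤ c)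
    (huv : ∀ x ∈ s, c < u x * v x) :
    ConvexOn 𝕜 s fun x => (v x - c / u x)⁻¹ := by
  have hconc : ConcaveOn 𝕜 s fun x => v x - c / u x := by
    have := hv.sub ((hu.convexOn_inv hu₀).smul hc)
    simpa only [Pi.sub_def, smul_eq_mul, div_eq_mul_inv] using this
  refine hconc.convexOn_inv fun x hx => ?_
  rw [sub_pos, div_lt_iff₀' (hu₀ x hx)]
  exact huv x hx

theorem ConcaveOn.convexOn_add_div_mul_sub {u v : E → 𝕜} {α β c : 𝕜} (hu : ConcaveOn 𝕜 s u)
    (hv : ConcaveOn 𝕜 s v) (hu₀ : ∀ x ∈ s, 0 < u x) (hv₀ : ∀ x ∈ s, 0 < v x) (hc : 0 ≤ c)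
    (huv : ∀ x ∈ s, c < u x * v x) (hα : 0 ≤ α) (hβ : 0 ≤ β) :
    ConvexOn 𝕜 s fun x => (α * u x + β * v x) / (u x * v x - c) := by
  have hvu : ∀ x ∈ s, c < v x * u x := fun x hx => mul_comm (u x) (v x) ▸ huv x hx
  refine (((hu.convexOn_inv_sub_div hv hu₀ hc huv).smul hα).add
    ((hv.convexOn_inv_sub_div hu hv₀ hc hvu).smul hβ)).congr fun x hx => ?_
  simp only [Pi.add_apply, smul_eq_mul, ← div_eq_mul_inv]
  exact div_sub_div_add_div_sub_div α β (hu₀ x hx).ne' (hv₀ x hx).ne' (sub_pos.2 (huv x hx)).ne'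

end

/-- Convexity of the per-frequency objective term
`f(a,â) = (m̂(1+mλa k̄) + m(1+m̂λ̂â k̄))/(1+mλa+m̂λ̂â+mλa m̂λ̂â k̄)`
on `[0,∞)²`. -/
theorem stmt_11 (m mh lam lamh k : ℝ) (hm : 0 < m) (hmh : 0 < mh)
    (hlam : 0 < lam) (hlamh : 0 < lamh) (hk0 : 0 ≤ k) (hk1 : k < 1) :
    ConvexOn ℝ (Set.Ici 0 ×ˢ Set.Ici 0)
      (fun p : ℝ × ℝ =>
        (mh * (1 + m * lam * p.1 * (1 - k ^ 2)) + m * (1 + mh * lamh * p.2 * (1 - k ^ 2))) /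
          (1 + m * lam * p.1 + mh * lamh * p.2 + m * lam * p.1 * mh * lamh * p.2 * (1 - k ^ 2))) := by
  have hk : k ^ 2 < 1 := pow_lt_one₀ hk0 hk1 two_ne_zero
  have hkb : 0 < 1 - k ^ 2 := sub_pos.2 hk
  set S : Set (ℝ × ℝ) := Ici 0 ×ˢ Ici 0
  have hS : Convex ℝ S := (convex_Ici 0).prod (convex_Ici 0)
  set u : ℝ × ℝ → ℝ := fun p => 1 + (1 - k ^ 2) * (m * lam) * p.1
  set v : ℝ × ℝ → ℝ := fun p => 1 + (1 - k ^ 2) * (mh * lamh) * p.2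
  have hu : ConcaveOn ℝ S u := (concaveOn_const 1 hS).add
    (((LinearMap.fst ℝ ℝ ℝ).concaveOn hS).smul (mul_pos hkb (mul_pos hm hlam)).le)
  have hv : ConcaveOn ℝ S v := (concaveOn_const 1 hS).add
    (((LinearMap.snd ℝ ℝ ℝ).concaveOn hS).smul (mul_pos hkb (mul_pos hmh hlamh)).le)
  have hu₁ : ∀ p ∈ S, 1 ≤ u p := fun p hp =>
    le_add_of_nonneg_right (mul_nonneg (mul_pos hkb (mul_pos hm hlam)).le hp.1)
  have hv₁ : ∀ p ∈ S, 1 ≤ v p := fun p hp =>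
    le_add_of_nonneg_right (mul_nonneg (mul_pos hkb (mul_pos hmh hlamh)).le hp.2)
  have huv : ∀ p ∈ S, k ^ 2 < u p * v p := fun p hp =>
    hk.trans_le (one_le_mul_of_one_le_of_one_le (hu₁ p hp) (hv₁ p hp))
  refine ((hu.convexOn_add_div_mul_sub hv (fun p hp => one_pos.trans_le (hu₁ p hp))
    (fun p hp => one_pos.trans_le (hv₁ p hp)) (sq_nonneg k) huv hmh.le hm.le).smul hkb.le).congr
    fun p _ => ?_
  conv_rhs => rw [← mul_div_mul_left _ _ hkb.ne']
  simp only [smul_eq_mul, mul_div_assoc']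
  congr 1 <;> simp only [u, v] <;> ring
end

section
/- Let C̃ = diag(1/c₁, 1/c₂ + 1 - k²) + k⃗ k⃗ᵀ where c₁, c₂ > 0, k ∈ [0,1), and k⃗ = (1,k)ᵀ. Then C̃ is invertible and k⃗ᵀ C̃⁻¹ k⃗ = (k⃗ᵀ D k⃗)/(1 + k⃗ᵀ D k⃗), where D = diag(c₁, c₂/(1 + c₂(1-k²))). -/
open Matrix

/-- Sherman–Morrison computation at the heart of Lemma 3:
for `C̃ = diag(1/c₁, 1/c₂ + 1 - k²) + k⃗ k⃗ᵀ` one has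
`k⃗ᵀ C̃⁻¹ k⃗ = (k⃗ᵀ D k⃗)/(1 + k⃗ᵀ D k⃗)` with `D = diag(c₁, c₂/(1+c₂(1-k²)))`. -/
theorem stmt_18 (c₁ c₂ k : ℝ) (hc₁ : 0 < c₁) (hc₂ : 0 < c₂) (hk0 : 0 ≤ k) (hk1 : k < 1) :
    IsUnit (Matrix.diagonal ![1 / c₁, 1 / c₂ + 1 - k ^ 2]
              + Matrix.vecMulVec ![1, k] ![1, k]).det ∧
    ![1, k] ⬝ᵥ ((Matrix.diagonal ![1 / c₁, 1 / c₂ + 1 - k ^ 2]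
              + Matrix.vecMulVec ![1, k] ![1, k])⁻¹ *ᵥ ![1, k])
      = (![1, k] ⬝ᵥ (Matrix.diagonal ![c₁, c₂ / (1 + c₂ * (1 - k ^ 2))] *ᵥ ![1, k])) /
        (1 + ![1, k] ⬝ᵥ (Matrix.diagonal ![c₁, c₂ / (1 + c₂ * (1 - k ^ 2))] *ᵥ ![1, k])) := by
  have hk2 : 1 - k ^ 2 > 0 := by nlinarith
  have h2 : (0:ℝ) < 1 + c₂ * (1 - k ^ 2) := by positivity
  set A := Matrix.diagonal ![1 / c₁, 1 / c₂ + 1 - k ^ 2] + Matrix.vecMulVec ![1, k] ![1, k]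
    with hA
  have hdet : A.det = (1/c₁ + 1) * (1/c₂ + 1) - k^2 := by
    simp [hA, Matrix.det_fin_two, Matrix.vecMulVec_apply]
    ring
  have h1 : 0 < 1/c₁ := by positivity
  have h3 : 0 < 1/c₂ := by positivity
  have hdetpos : 0 < A.det := by rw [hdet]; nlinarith
  have hdet' : A.det ≠ 0 := hdetpos.ne'
  refine ⟨isUnit_iff_ne_zero.mpr hdet', ?_⟩
  have hinv : A⁻¹ = A.det⁻¹ • A.adjugate := by
    rw [Matrix.inv_def, Ring.inverse_eq_inv']
  have key : ![1, k] ⬝ᵥ (A⁻¹ *ᵥ ![1, k])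
      = ((1/c₂ + 1) + (1/c₁ + 1) * k ^ 2 - 2 * k ^ 2) / A.det := by
    rw [hinv, Matrix.adjugate_fin_two]
    rw [div_eq_mul_inv, mul_comm]
    simp only [Matrix.smul_mulVec, dotProduct_smul]
    congr 1
    simp [hA, Matrix.mulVec, dotProduct, Fin.sum_univ_two,
      Matrix.vecMulVec_apply, Matrix.diagonal, Matrix.of_apply]
    ring
  rw [key, hdet]
  have hc1 := hc₁.ne'
  have hc2 := hc₂.ne'
  have h2' := h2.ne'
  have hd2 : ((1:ℝ)/c₁ + 1) * (1/c₂ + 1) - k^2 ≠ 0 := by rw [hdet] at hdet'; exact hdet'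
  simp only [Matrix.mulVec, dotProduct, Fin.sum_univ_two, Matrix.diagonal,
    Matrix.of_apply, Matrix.cons_val_zero, Matrix.cons_val_one, Matrix.head_cons]
  norm_num
  have hd3 : ((c₁:ℝ)⁻¹ + 1) * (c₂⁻¹ + 1) - k ^ 2 ≠ 0 := by
    simpa [one_div] using hd2
  have hEpos : (0:ℝ) < 1 + (c₁ + k * (c₂ / (1 + c₂ * (1 - k ^ 2)) * k)) := by positivity
  rw [div_eq_div_iff hd3 hEpos.ne']
  field_simp
  ring
end
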